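/- The expectation ⟨f̂^{m-1}⟩(t) = Σ_i p_i(t) f̂_i^{m-1}(t) satisfies ∂⟨f̂^{m-1}⟩/∂t = (⟨f̂^{2m-2}⟩ - ⟨f̂^{m-1}⟩² + (u-1)⟨f̂^{2m-2}⟩)/t², where ⟨f̂^{2m-2}⟩ = Σ_i p_i (f̂_i^{m-1})². -/

import Mathlib

/-!
Write `b_j(s) = 1 + ((u - 1) / s) f_j^{m-1}`, so that `N_j = b_j^{1/(1-u)}` and `f̂_j = f_j^{m-1} / b_j`.
Since `b_j' = -(u - 1) f_j^{m-1} / s²`, the escort weights have logarithmic derivative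
`N_j' / N_j = f̂_j / t²`, while `f̂_j' = (u - 1) f̂_j² / t²`. For normalised weights `p_j = N_j / Z`
with `N_j' = N_j h_j`, the derivative of `Σ p_j g_j` is `⟨h g + g'⟩ - ⟨h⟩⟨g⟩`; with `h = f̂ / t²`
and `g = f̂` this is the claimed formula.
-/

open Finset

lemma hasDerivAt_one_add_div_mul (a c : ℝ) {t : ℝ} (ht : t ≠ 0) :
    HasDerivAt (fun s : ℝ => 1 + (a / s) * c) (-(a / t ^ 2) * c) t := by
  have h := (hasDerivAt_inv ht).const_mul a
  simpa only [div_eq_mul_inv, mul_neg] using (h.mul_const c).const_add 1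

lemma hasDerivAt_one_add_div_mul_rpow {u c t : ℝ} (hu : u ≠ 1) (ht : t ≠ 0)
    (hb : 0 < 1 + ((u - 1) / t) * c) :
    HasDerivAt (fun s : ℝ => (1 + ((u - 1) / s) * c) ^ (1 / (1 - u)))
      ((1 + ((u - 1) / t) * c) ^ (1 / (1 - u)) * (c / (1 + ((u - 1) / t) * c) / t ^ 2)) t := by
  have hu' : (1 : ℝ) - u ≠ 0 := sub_ne_zero.mpr hu.symm
  refine ((hasDerivAt_one_add_div_mul (u - 1) c ht).rpow_const (Or.inl hb.ne')).congr_deriv ?_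
  rw [Real.rpow_sub hb, Real.rpow_one]
  field_simp
  ring

lemma hasDerivAt_div_one_add_div_mul {a c t : ℝ} (ht : t ≠ 0) (hb : 1 + (a / t) * c ≠ 0) :
    HasDerivAt (fun s : ℝ => c / (1 + (a / s) * c)) (a * (c / (1 + (a / t) * c)) ^ 2 / t ^ 2) t := by
  refine ((hasDerivAt_const t c).fun_div (hasDerivAt_one_add_div_mul a c ht) hb).congr_deriv ?_
  field_simp
  ring

lemma hasDerivAt_sum_div_sum_mul {ι : Type*} (s : Finset ι) {N g : ι → ℝ → ℝ} {h k : ι → ℝ}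
    {t : ℝ} (hN : ∀ i ∈ s, HasDerivAt (N i) (N i t * h i) t)
    (hg : ∀ i ∈ s, HasDerivAt (g i) (k i) t) (hNpos : ∀ i ∈ s, 0 < N i t) :
    HasDerivAt (fun x => ∑ i ∈ s, N i x / (∑ j ∈ s, N j x) * g i x)
      (∑ i ∈ s, N i t / (∑ j ∈ s, N j t) * (h i * g i t + k i) -
        (∑ i ∈ s, N i t / (∑ j ∈ s, N j t) * h i) *
          ∑ i ∈ s, N i t / (∑ j ∈ s, N j t) * g i t) t := by
  rcases s.eq_empty_or_nonempty with rfl | hs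
  · simpa using hasDerivAt_const t (0 : ℝ)
  set Z := ∑ j ∈ s, N j t with hZdef
  have hZ : 0 < Z := sum_pos hNpos hs
  have hZderiv : HasDerivAt (fun x => ∑ j ∈ s, N j x) (∑ j ∈ s, N j t * h j) t :=
    HasDerivAt.fun_sum hN
  have hH : ∑ j ∈ s, N j t / Z * h j = (∑ j ∈ s, N j t * h j) / Z := by
    rw [sum_div]
    exact sum_congr rfl fun j _ => div_mul_eq_mul_div _ _ _
  have hterm : ∀ i ∈ s, HasDerivAt (fun x => N i x / (∑ j ∈ s, N j x) * g i x)
      (N i t / Z * (h i * g i t + k i) - (∑ j ∈ s, N j t / Z * h j) * (N i t / Z * g i t)) t := by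
    intro i hi
    refine (((hN i hi).fun_div hZderiv hZ.ne').fun_mul (hg i hi)).congr_deriv ?_
    rw [hH, ← hZdef]
    field_simp
    ring
  refine (HasDerivAt.fun_sum hterm).congr_deriv ?_
  rw [sum_sub_distrib, ← mul_sum]

theorem deriv_expectation_fhat_general {W : ℕ} (u t m : ℝ) (hu : u ≠ 1) (ht : 0 < t)
    (f : Fin W → ℝ)
    (hpos : ∀ j, 0 < 1 + ((u - 1) / t) * f j ^ (m - 1)) :
    let N : Fin W → ℝ → ℝ :=
      fun j s => (1 + ((u - 1) / s) * f j ^ (m - 1)) ^ (1 / (1 - u))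
    let Z : ℝ → ℝ := fun s => ∑ j, N j s
    let p : Fin W → ℝ := fun j => N j t / Z t
    let fhat : Fin W → ℝ := fun j => f j ^ (m - 1) / (1 + ((u - 1) / t) * f j ^ (m - 1))
    HasDerivAt
      (fun s : ℝ => ∑ i, (N i s / Z s) *
        (f i ^ (m - 1) / (1 + ((u - 1) / s) * f i ^ (m - 1))))
      (((∑ i, p i * fhat i ^ 2) - (∑ i, p i * fhat i) ^ 2 +
          (u - 1) * ∑ i, p i * fhat i ^ 2) / t ^ 2) t := by
  intro N Z p fhat
  have hN : ∀ i ∈ univ, HasDerivAt (N i) (N i t * (fhat i / t ^ 2)) t := fun i _ =>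
    hasDerivAt_one_add_div_mul_rpow hu ht.ne' (hpos i)
  have hfhat : ∀ i ∈ univ, HasDerivAt (fun s => f i ^ (m - 1) / (1 + ((u - 1) / s) * f i ^ (m - 1)))
      ((u - 1) * fhat i ^ 2 / t ^ 2) t := fun i _ =>
    hasDerivAt_div_one_add_div_mul ht.ne' (hpos i).ne'
  refine (hasDerivAt_sum_div_sum_mul univ hN hfhat
    fun i _ => Real.rpow_pos_of_pos (hpos i) _).congr_deriv ?_
  show ∑ i, p i * (fhat i / t ^ 2 * fhat i + (u - 1) * fhat i ^ 2 / t ^ 2) -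
      (∑ i, p i * (fhat i / t ^ 2)) * ∑ i, p i * fhat i = _
  have hsecond : ∀ i, p i * (fhat i / t ^ 2 * fhat i + (u - 1) * fhat i ^ 2 / t ^ 2) =
      u * (p i * fhat i ^ 2) / t ^ 2 := fun i => by ring
  have hfirst : ∀ i, p i * (fhat i / t ^ 2) = p i * fhat i / t ^ 2 := fun i => by ring
  simp only [hsecond, hfirst, ← sum_div, ← mul_sum]
  ring

/-- The expectation `⟨f̂^{m-1}⟩(t) = Σ_i p_i(t) f̂_i^{m-1}(t)` satisfies
`∂⟨f̂^{m-1}⟩/∂t = (⟨f̂^{2m-2}⟩ - ⟨f̂^{m-1}⟩² + (u-1)⟨f̂^{2m-2}⟩)/t²`. -/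
theorem deriv_expectation_fhat {W : ℕ} (u t m : ℝ) (hu : u ≠ 1) (ht : 0 < t)
    (hm : 1 < m) (f : Fin W → ℝ) (hf : ∀ j, 0 ≤ f j)
    (hpos : ∀ j, 0 < 1 + ((u - 1) / t) * f j ^ (m - 1)) :
    let N : Fin W → ℝ → ℝ :=
      fun j s => (1 + ((u - 1) / s) * f j ^ (m - 1)) ^ (1 / (1 - u))
    let Z : ℝ → ℝ := fun s => ∑ j, N j s
    let p : Fin W → ℝ := fun j => N j t / Z t
    let fhat : Fin W → ℝ := fun j => f j ^ (m - 1) / (1 + ((u - 1) / t) * f j ^ (m - 1))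
    HasDerivAt
      (fun s : ℝ => ∑ i, (N i s / Z s) *
        (f i ^ (m - 1) / (1 + ((u - 1) / s) * f i ^ (m - 1))))
      (((∑ i, p i * fhat i ^ 2) - (∑ i, p i * fhat i) ^ 2 +
          (u - 1) * ∑ i, p i * fhat i ^ 2) / t ^ 2) t :=
  deriv_expectation_fhat_general u t m hu ht f hpos
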